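/- arXiv:2407.06408 — 6 statements merged into one kernel-verified Lean document; each statement's English description precedes it below -/
import Mathlib

section
/- (Theorem of the alternative.) Suppose the spectrahedron F = {X ∈ Sⁿ₊ : A(X) = b} is nonempty. Then exactly one of the following two statements holds: (1) there exists X ≻ 0 with A(X) = b; (2) there exists λ ∈ ℝᵐ with 0 ≠ A*(λ) ⪰ 0 and ⟨b, λ⟩ = 0. -/
/-!
If no `X ≻ 0` solves `A X = b`, then `b` lies outside `A(Sⁿ₊₊)`, which is convex and open: `A` is
a surjective linear map, and on symmetric `Aᵢ` it takes the same values on the positive definite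
cone as on the open set of all (not necessarily symmetric) matrices with positive quadratic form.
A separating functional `λ` gives `⟨λ, b⟩ < ⟨A* λ, X⟩` for all `X ≻ 0`; passing to the closure
`Sⁿ₊` of this cone and scaling shows `A* λ ⪰ 0` and `⟨λ, b⟩ ≤ 0`, while
`⟨λ, b⟩ = ⟨A* λ, X₀⟩ ≥ 0` for any `X₀ ∈ F`. The alternatives are exclusive because
`⟨M, X⟩ > 0` whenever `0 ≠ M ⪰ 0` and `X ≻ 0`.
-/

open Matrix Set

noncomputable section

/-- The linear map `A X = (⟨Aᵢ, X⟩)ᵢ` (trace inner product). -/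
def calA {n m : ℕ} (A : Fin m → Matrix (Fin n) (Fin n) ℝ)
    (X : Matrix (Fin n) (Fin n) ℝ) : Fin m → ℝ := fun i => (A i * X).trace

/-- The adjoint map `A* λ = ∑ᵢ λᵢ Aᵢ`. -/
def adjA {n m : ℕ} (A : Fin m → Matrix (Fin n) (Fin n) ℝ) (lam : Fin m → ℝ) :
    Matrix (Fin n) (Fin n) ℝ := ∑ i, lam i • A i

open Filter Topology

namespace Matrix

variable {ι : Type*} [Fintype ι]

lemma PosSemidef.exists_eq_conjTranspose_mul_self {M : Matrix ι ι ℝ} (hM : M.PosSemidef) :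
    ∃ B : Matrix ι ι ℝ, M = Bᴴ * B := by
  classical
  open scoped MatrixOrder in
  exact CStarAlgebra.nonneg_iff_eq_star_mul_self.mp hM.nonneg

lemma trace_conjTranspose_mul_self_mul_conjTranspose_mul_self (B C : Matrix ι ι ℝ) :
    (Bᴴ * B * (Cᴴ * C)).trace = (C * Bᴴ * (C * Bᴴ)ᴴ).trace := by
  calc (Bᴴ * B * (Cᴴ * C)).trace = (Bᴴ * B * Cᴴ * C).trace := by rw [Matrix.mul_assoc (Bᴴ * B)]
    _ = (C * (Bᴴ * B * Cᴴ)).trace := trace_mul_comm _ _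
    _ = (C * Bᴴ * (C * Bᴴ)ᴴ).trace := by simp [Matrix.mul_assoc]

lemma PosSemidef.trace_mul_nonneg {M X : Matrix ι ι ℝ} (hM : M.PosSemidef) (hX : X.PosSemidef) :
    0 ≤ (M * X).trace := by
  obtain ⟨B, rfl⟩ := hM.exists_eq_conjTranspose_mul_self
  obtain ⟨C, rfl⟩ := hX.exists_eq_conjTranspose_mul_self
  rw [trace_conjTranspose_mul_self_mul_conjTranspose_mul_self]
  exact (posSemidef_self_mul_conjTranspose _).trace_nonneg

lemma PosSemidef.trace_mul_pos_of_posDef [DecidableEq ι] {M X : Matrix ι ι ℝ}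
    (hM : M.PosSemidef) (hM0 : M ≠ 0) (hX : X.PosDef) : 0 < (M * X).trace := by
  obtain ⟨B, rfl⟩ := hM.exists_eq_conjTranspose_mul_self
  obtain ⟨C, hC⟩ := hX.posSemidef.exists_eq_conjTranspose_mul_self
  have hCunit : IsUnit C := by
    have := hX.isUnit
    rw [hC, isUnit_iff_isUnit_det, det_mul] at this
    exact (isUnit_iff_isUnit_det C).mpr (IsUnit.mul_iff.mp this).2
  rw [hC, trace_conjTranspose_mul_self_mul_conjTranspose_mul_self]
  refine (posSemidef_self_mul_conjTranspose _).trace_nonneg.lt_of_ne' ?_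
  rw [Ne, trace_mul_conjTranspose_self_eq_zero_iff, hCunit.mul_right_eq_zero, conjTranspose_eq_zero]
  rintro rfl
  simp at hM0

lemma trace_mul_vecMulVec_self (M : Matrix ι ι ℝ) (v : ι → ℝ) :
    (M * vecMulVec v v).trace = v ⬝ᵥ M *ᵥ v := by
  rw [mul_vecMulVec, trace_vecMulVec, dotProduct_comm]

lemma le_trace_mul_of_posSemidef [DecidableEq ι] {M X : Matrix ι ι ℝ} {γ : ℝ}
    (h : ∀ Y : Matrix ι ι ℝ, Y.PosDef → γ < (M * Y).trace) (hX : X.PosSemidef) :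
    γ ≤ (M * X).trace := by
  have hperturb : ∀ s : ℝ, (M * (X + s • 1)).trace = (M * X).trace + s * M.trace := by
    simp [Matrix.mul_add, trace_add]
  have hlim : Tendsto (fun s : ℝ => (M * (X + s • 1)).trace) (𝓝[>] 0) (𝓝 (M * X).trace) := by
    simp_rw [hperturb]
    refine ((continuous_const.add (continuous_id.mul continuous_const)).tendsto' 0 _ ?_).mono_left
      nhdsWithin_le_nhds
    simp
  exact ge_of_tendsto hlim (eventually_nhdsWithin_of_forall fun s hs =>
    (h _ (PosDef.posSemidef_add hX (PosDef.one.smul hs))).le)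

lemma posSemidef_of_forall_le_trace_mul {M : Matrix ι ι ℝ} {γ : ℝ} (hM : M.IsHermitian)
    (h : ∀ X : Matrix ι ι ℝ, X.PosSemidef → γ ≤ (M * X).trace) : M.PosSemidef := by
  refine PosSemidef.of_dotProduct_mulVec_nonneg hM fun v => ?_
  rw [star_trivial, ← trace_mul_vecMulVec_self]
  by_contra! hneg
  obtain ⟨t, htγ, ht⟩ := (((tendsto_id.atTop_mul_const_of_neg hneg).eventually
    (eventually_lt_atBot γ)).and (eventually_gt_atTop 0)).exists
  have := h _ ((posSemidef_vecMulVec_self_star v).smul ht.le)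
  simp only [Matrix.mul_smul, trace_smul, smul_eq_mul, star_trivial] at this
  exact this.not_gt htγ

/-- Unlike `PosDef`, no symmetry is imposed, so this set is open in the space of all matrices. -/
def posQuadForm : Set (Matrix ι ι ℝ) :=
  {X | ∀ v ∈ Metric.sphere (0 : ι → ℝ) 1, 0 < v ⬝ᵥ X *ᵥ v}

lemma isOpen_posQuadForm : IsOpen (posQuadForm : Set (Matrix ι ι ℝ)) := by
  refine isOpen_iff_mem_nhds.mpr fun X hX =>
    (isCompact_sphere 0 1).eventually_forall_of_forall_eventually fun v hv => ?_
  have hcont : Continuous fun z : Matrix ι ι ℝ × (ι → ℝ) => z.2 ⬝ᵥ z.1 *ᵥ z.2 :=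
    continuous_snd.dotProduct (continuous_fst.matrix_mulVec continuous_snd)
  exact (hcont.tendsto (X, v)).eventually (lt_mem_nhds (hX v hv))

lemma convex_posQuadForm : Convex ℝ (posQuadForm : Set (Matrix ι ι ℝ)) := by
  simp only [posQuadForm, ofPred_forall]
  refine convex_iInter₂ fun v _ => convex_halfSpace_gt ⟨fun X Y => ?_, fun c X => ?_⟩ 0
  · rw [add_mulVec, dotProduct_add]
  · rw [smul_mulVec, dotProduct_smul]

lemma dotProduct_mulVec_pos_of_mem_posQuadForm {X : Matrix ι ι ℝ} (hX : X ∈ posQuadForm)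
    {v : ι → ℝ} (hv : v ≠ 0) : 0 < v ⬝ᵥ X *ᵥ v := by
  have hvn : 0 < ‖v‖⁻¹ := inv_pos.mpr (norm_pos_iff.mpr hv)
  have := hX (‖v‖⁻¹ • v) (by simp [norm_smul, hv])
  rw [mulVec_smul, dotProduct_smul, smul_dotProduct, smul_eq_mul, smul_eq_mul] at this
  exact pos_of_mul_pos_right (pos_of_mul_pos_right this hvn.le) hvn.le

lemma PosDef.mem_posQuadForm {X : Matrix ι ι ℝ} (hX : X.PosDef) : X ∈ posQuadForm :=
  fun v hv => by simpa using hX.dotProduct_mulVec_pos (by rintro rfl; simp at hv)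

lemma posDef_half_smul_add_transpose {X : Matrix ι ι ℝ} (hX : X ∈ posQuadForm) :
    ((2 : ℝ)⁻¹ • (X + Xᵀ)).PosDef := by
  refine PosDef.of_dotProduct_mulVec_pos ?_ fun v hv => ?_
  · simp [IsHermitian, transpose_add, add_comm]
  · have hT : v ⬝ᵥ Xᵀ *ᵥ v = v ⬝ᵥ X *ᵥ v := by
      rw [mulVec_transpose, dotProduct_comm, ← dotProduct_mulVec]
    rw [star_trivial, smul_mulVec, dotProduct_smul, add_mulVec, dotProduct_add, hT, smul_eq_mul]
    have := dotProduct_mulVec_pos_of_mem_posQuadForm hX hv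
    positivity

lemma IsSymm.trace_mul_transpose {M : Matrix ι ι ℝ} (hM : M.IsSymm) (X : Matrix ι ι ℝ) :
    (M * Xᵀ).trace = (M * X).trace := by
  rw [← trace_transpose, transpose_mul, transpose_transpose, hM.eq, trace_mul_comm]

end Matrix

section Spectrahedron
variable {n m : ℕ} {A : Fin m → Matrix (Fin n) (Fin n) ℝ}

def calALinearMap (A : Fin m → Matrix (Fin n) (Fin n) ℝ) :
    Matrix (Fin n) (Fin n) ℝ →ₗ[ℝ] Fin m → ℝ where
  toFun := calA A
  map_add' X Y := funext fun i => by simp [calA, Matrix.mul_add]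
  map_smul' c X := funext fun i => by simp [calA]

lemma adjA_eq_linearCombination (lam : Fin m → ℝ) :
    adjA A lam = Fintype.linearCombination ℝ A lam :=
  (Fintype.linearCombination_apply ℝ A lam).symm

lemma trace_adjA_mul (lam : Fin m → ℝ) (X : Matrix (Fin n) (Fin n) ℝ) :
    (adjA A lam * X).trace = lam ⬝ᵥ calA A X := by
  simp [adjA, Finset.sum_mul, trace_sum, dotProduct, calA]

lemma isHermitian_adjA (hA : ∀ i, (A i).IsSymm) (lam : Fin m → ℝ) :
    (adjA A lam).IsHermitian := by
  rw [isHermitian_iff_isSymm, adjA, IsSymm, transpose_sum]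
  exact Finset.sum_congr rfl fun i _ => ((hA i).smul (lam i)).eq

lemma calA_half_smul_add_transpose (hA : ∀ i, (A i).IsSymm) (X : Matrix (Fin n) (Fin n) ℝ) :
    calA A ((2 : ℝ)⁻¹ • (X + Xᵀ)) = calA A X := by
  funext i
  simp only [calA, Matrix.mul_smul, Matrix.mul_add, trace_smul, trace_add,
    (hA i).trace_mul_transpose, smul_eq_mul]
  ring

lemma calA_surjective (hA : ∀ i, (A i).IsSymm) (hLI : LinearIndependent ℝ A) :
    Function.Surjective (calA A) := by
  -- `A ∘ A*` is injective because `⟨λ, A (A* λ)⟩ = ‖A* λ‖²`, hence bijective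
  let T := calALinearMap A ∘ₗ Fintype.linearCombination ℝ A
  have hT : Function.Injective T := by
    rw [← LinearMap.ker_eq_bot, LinearMap.ker_eq_bot']
    intro lam hlam
    have hsq : (adjA A lam * (adjA A lam)ᴴ).trace = 0 := by
      rw [(isHermitian_adjA hA lam).eq, trace_adjA_mul, adjA_eq_linearCombination]
      exact (congrArg (lam ⬝ᵥ ·) hlam).trans (dotProduct_zero lam)
    rw [trace_mul_conjTranspose_self_eq_zero_iff, adjA_eq_linearCombination] at hsq
    exact linearIndependent_iff_injective_fintypeLinearCombination.mp hLI
      (hsq.trans (map_zero _).symm)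
  exact Function.Surjective.of_comp (LinearMap.injective_iff_surjective.mp hT)

lemma image_calA_posDef_eq (hA : ∀ i, (A i).IsSymm) :
    calA A '' {X | X.PosDef} = calA A '' posQuadForm := by
  refine Subset.antisymm (image_mono fun X hX => PosDef.mem_posQuadForm hX) ?_
  rintro _ ⟨X, hX, rfl⟩
  exact ⟨_, posDef_half_smul_add_transpose hX, calA_half_smul_add_transpose hA X⟩

lemma exists_dotProduct_lt_calA_of_notMem_image_posDef (hA : ∀ i, (A i).IsSymm)
    (hLI : LinearIndependent ℝ A) {b : Fin m → ℝ} (hb : b ∉ calA A '' {X | X.PosDef}) :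
    ∃ lam : Fin m → ℝ, ∀ X : Matrix (Fin n) (Fin n) ℝ, X.PosDef →
      lam ⬝ᵥ b < lam ⬝ᵥ calA A X := by
  rw [image_calA_posDef_eq hA] at hb
  obtain ⟨f, hf⟩ := geometric_hahn_banach_open_point
    (convex_posQuadForm.linear_image (calALinearMap A))
    ((calALinearMap A).isOpenMap_of_finiteDimensional (calA_surjective hA hLI) _
      isOpen_posQuadForm) hb
  have hrepr : ∀ y, (fun i => -f (Pi.single i 1)) ⬝ᵥ y = -f y := fun y => by
    conv_rhs => rw [← Finset.univ_sum_single y, map_sum]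
    rw [dotProduct, ← Finset.sum_neg_distrib]
    refine Finset.sum_congr rfl fun i _ => ?_
    have hsingle : Pi.single i (y i) = y i • Pi.single i (1 : ℝ) := by
      rw [← Pi.single_smul, smul_eq_mul, mul_one]
    rw [hsingle, map_smul, smul_eq_mul]
    ring
  refine ⟨fun i => -f (Pi.single i 1), fun X hX => ?_⟩
  rw [hrepr, hrepr, neg_lt_neg_iff]
  exact hf _ ⟨X, hX.mem_posQuadForm, rfl⟩

lemma not_exists_certificate_of_exists_posDef {b : Fin m → ℝ}
    (h : ∃ X : Matrix (Fin n) (Fin n) ℝ, X.PosDef ∧ calA A X = b) :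
    ¬ ∃ lam : Fin m → ℝ, adjA A lam ≠ 0 ∧ (adjA A lam).PosSemidef ∧ ∑ i, b i * lam i = 0 := by
  rintro ⟨lam, hne, hpsd, hb⟩
  obtain ⟨X, hX, rfl⟩ := h
  have hpos := hpsd.trace_mul_pos_of_posDef hne hX
  rw [trace_adjA_mul, dotProduct_comm] at hpos
  exact hpos.ne' hb

lemma exists_certificate_of_not_exists_posDef (hA : ∀ i, (A i).IsSymm)
    (hLI : LinearIndependent ℝ A) {b : Fin m → ℝ}
    (hF : ∃ X : Matrix (Fin n) (Fin n) ℝ, X.PosSemidef ∧ calA A X = b)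
    (h : ¬ ∃ X : Matrix (Fin n) (Fin n) ℝ, X.PosDef ∧ calA A X = b) :
    ∃ lam : Fin m → ℝ, adjA A lam ≠ 0 ∧ (adjA A lam).PosSemidef ∧ ∑ i, b i * lam i = 0 := by
  obtain ⟨lam, hlam⟩ := exists_dotProduct_lt_calA_of_notMem_image_posDef hA hLI (b := b)
    fun ⟨X, hX, hXb⟩ => h ⟨X, hX, hXb⟩
  have hle : ∀ X : Matrix (Fin n) (Fin n) ℝ, X.PosSemidef → lam ⬝ᵥ b ≤ (adjA A lam * X).trace :=
    fun X => le_trace_mul_of_posSemidef fun Y hY => (trace_adjA_mul lam Y).symm ▸ hlam Y hY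
  have hpsd := posSemidef_of_forall_le_trace_mul (isHermitian_adjA hA lam) hle
  refine ⟨lam, fun h0 => ?_, hpsd, ?_⟩
  · have hlam0 : lam = 0 := linearIndependent_iff_injective_fintypeLinearCombination.mp hLI
      (by rw [← adjA_eq_linearCombination, h0, map_zero])
    simpa [hlam0] using hlam 1 PosDef.one
  · obtain ⟨X₀, hX₀, rfl⟩ := hF
    have hnonpos : lam ⬝ᵥ calA A X₀ ≤ 0 := by simpa using hle 0 PosSemidef.zero
    have hnonneg : 0 ≤ lam ⬝ᵥ calA A X₀ := trace_adjA_mul lam X₀ ▸ hpsd.trace_mul_nonneg hX₀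
    rw [← dotProduct, dotProduct_comm]
    exact le_antisymm hnonpos hnonneg

end Spectrahedron

/-- theorem of the alternative: if the spectrahedron
`F = {X ⪰ 0 : A X = b}` is nonempty, then exactly one of the following holds:
(1) ∃ X ≻ 0 with A X = b; (2) ∃ λ with 0 ≠ A* λ ⪰ 0 and ⟨b, λ⟩ = 0. -/
theorem stmt2 {n m : ℕ} (A : Fin m → Matrix (Fin n) (Fin n) ℝ)
    (hA : ∀ i, (A i).IsSymm) (hLI : LinearIndependent ℝ A) (b : Fin m → ℝ)
    (hF : ∃ X : Matrix (Fin n) (Fin n) ℝ, X.PosSemidef ∧ calA A X = b) :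
    Xor'
      (∃ X : Matrix (Fin n) (Fin n) ℝ, X.PosDef ∧ calA A X = b)
      (∃ lam : Fin m → ℝ, adjA A lam ≠ 0 ∧ (adjA A lam).PosSemidef ∧
        ∑ i, b i * lam i = 0) := by
  by_cases h : ∃ X : Matrix (Fin n) (Fin n) ℝ, X.PosDef ∧ calA A X = b
  · exact Or.inl ⟨h, not_exists_certificate_of_exists_posDef h⟩
  · exact Or.inr ⟨exists_certificate_of_not_exists_posDef hA hLI hF h, h⟩
end
end

section
/- (Projection onto a face of the semidefinite cone.) Let V be an n×r real matrix with orthonormal columns (VᵀV = I_r) and let f = {V R Vᵀ : R ∈ S^r₊} be the corresponding face of Sⁿ₊. Then for every U ∈ Sⁿ, the nearest point in f to U is P_f(U) = V · P_{S^r₊}(Vᵀ U V) · Vᵀ. -/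
open Matrix Set

noncomputable section

/-! The congruence `S ↦ V S Vᵀ` has adjoint `U ↦ Vᵀ U V` for the trace inner product, and
`VᵀV = I` makes it an isometry. Pythagoras then gives
`‖U - V S Vᵀ‖² = ‖U‖² - ‖Vᵀ U V‖² + ‖Vᵀ U V - S‖²`, so over the face the distance to `U` differs
by a constant from the distance of `S` to `Vᵀ U V` in `S^r₊`, and the minimisers correspond. -/

/-- Squared Frobenius norm via the trace inner product. -/
def frobSq {k : ℕ} (M : Matrix (Fin k) (Fin k) ℝ) : ℝ := (Mᵀ * M).trace

/-- `P` is a nearest point to `X` in `C` (Frobenius norm). -/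
def IsProjOn {k : ℕ} (C : Set (Matrix (Fin k) (Fin k) ℝ))
    (X P : Matrix (Fin k) (Fin k) ℝ) : Prop :=
  P ∈ C ∧ ∀ Y ∈ C, frobSq (X - P) ≤ frobSq (X - Y)

section Congruence

variable {m r R : Type*} [Fintype m] [Fintype r] [CommRing R]

theorem Matrix.trace_transpose_mul_conj (V : Matrix m r R) (A : Matrix m m R)
    (B : Matrix r r R) : (Aᵀ * (V * B * Vᵀ)).trace = ((Vᵀ * A * V)ᵀ * B).trace := by
  rw [transpose_mul, transpose_mul, transpose_transpose, ← Matrix.mul_assoc, trace_mul_comm]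
  simp only [Matrix.mul_assoc]

theorem Matrix.trace_transpose_conj_mul (V : Matrix m r R) (A : Matrix m m R)
    (B : Matrix r r R) : ((V * B * Vᵀ)ᵀ * A).trace = (Bᵀ * (Vᵀ * A * V)).trace := by
  rw [← trace_transpose, transpose_mul, transpose_transpose, trace_transpose_mul_conj,
    ← trace_transpose, transpose_mul, transpose_transpose]

end Congruence

theorem frobSq_sub_conj {n r : ℕ} {V : Matrix (Fin n) (Fin r) ℝ} (hV : Vᵀ * V = 1)
    (U : Matrix (Fin n) (Fin n) ℝ) (S : Matrix (Fin r) (Fin r) ℝ) :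
    frobSq (U - V * S * Vᵀ)
      = frobSq U - frobSq (Vᵀ * U * V) + frobSq (Vᵀ * U * V - S) := by
  have hVSV : Vᵀ * (V * S * Vᵀ) * V = S := by
    simp only [← Matrix.mul_assoc, hV, Matrix.one_mul]
    rw [Matrix.mul_assoc, hV, Matrix.mul_one]
  simp only [frobSq, transpose_sub, Matrix.sub_mul, Matrix.mul_sub, trace_sub,
    trace_transpose_mul_conj, trace_transpose_conj_mul, hVSV]
  ring

theorem IsProjOn.map {k l : ℕ} {C : Set (Matrix (Fin k) (Fin k) ℝ)}
    {g : Matrix (Fin k) (Fin k) ℝ → Matrix (Fin l) (Fin l) ℝ} {X : Matrix (Fin l) (Fin l) ℝ}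
    {Y P : Matrix (Fin k) (Fin k) ℝ} (c : ℝ) (hg : ∀ S, frobSq (X - g S) = c + frobSq (Y - S))
    (hP : IsProjOn C Y P) : IsProjOn {Z | ∃ R, R ∈ C ∧ Z = g R} X (g P) := by
  refine ⟨⟨P, hP.1, rfl⟩, ?_⟩
  rintro _ ⟨R, hR, rfl⟩
  rw [hg, hg]
  exact add_le_add_right (hP.2 R hR) c

theorem stmt4_general {n r : ℕ} (V : Matrix (Fin n) (Fin r) ℝ) (hV : Vᵀ * V = 1)
    (U : Matrix (Fin n) (Fin n) ℝ)
    (Pr : Matrix (Fin r) (Fin r) ℝ)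
    (hPr : IsProjOn {R : Matrix (Fin r) (Fin r) ℝ | R.PosSemidef} (Vᵀ * U * V) Pr) :
    IsProjOn {Y : Matrix (Fin n) (Fin n) ℝ |
        ∃ R : Matrix (Fin r) (Fin r) ℝ, R.PosSemidef ∧ Y = V * R * Vᵀ}
      U (V * Pr * Vᵀ) :=
  hPr.map (g := fun R ↦ V * R * Vᵀ) _ fun S ↦ by
    rw [frobSq_sub_conj hV, sub_add_eq_add_sub, add_sub_assoc]

/-- projection onto a face of the PSD cone: if `V` is `n × r` with
orthonormal columns and `f = {V R Vᵀ : R ∈ S^r₊}`, then for every `U ∈ Sⁿ` the nearest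
point in `f` to `U` is `V ⬝ P_{S^r₊}(Vᵀ U V) ⬝ Vᵀ`. -/
theorem stmt4 {n r : ℕ} (V : Matrix (Fin n) (Fin r) ℝ) (hV : Vᵀ * V = 1)
    (U : Matrix (Fin n) (Fin n) ℝ) (hU : U.IsSymm)
    (Pr : Matrix (Fin r) (Fin r) ℝ)
    (hPr : IsProjOn {R : Matrix (Fin r) (Fin r) ℝ | R.PosSemidef} (Vᵀ * U * V) Pr) :
    IsProjOn {Y : Matrix (Fin n) (Fin n) ℝ |
        ∃ R : Matrix (Fin r) (Fin r) ℝ, R.PosSemidef ∧ Y = V * R * Vᵀ}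
      U (V * Pr * Vᵀ) :=
  stmt4_general V hV U Pr hPr
end
end

section
/- Let W ∈ Sⁿ, let F = {X ⪰ 0 : A(X) = b} be nonempty, and define F(y) = A(P_{Sⁿ₊}(W + A*(y))) − b for y ∈ ℝᵐ. Then strong duality (zero duality gap together with dual attainment) holds for the best approximation problem min{½‖X − W‖² : X ∈ F} if and only if F has a root ȳ ∈ ℝᵐ with F(ȳ) = 0; moreover, in that case the unique optimal solution is X* = P_{Sⁿ₊}(W + A*(ȳ)), and equivalently: ȳ is a root of F if and only if the triple (X̄, ȳ, Z̄) with X̄ = P_{Sⁿ₊}(W + A*(ȳ)) and Z̄ = −P_{Sⁿ₋}(W + A*(ȳ)) satisfies the KKT conditions X̄ − W − A*(ȳ) − Z̄ = 0, Z̄ ⪰ 0, A(X̄) = b, X̄ ⪰ 0, ⟨Z̄, X̄⟩ = 0. -/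
open Matrix Set

noncomputable section

/-- The spectrahedron `F = {X ⪰ 0 : A X = b}`. -/
def spectra {n m : ℕ} (A : Fin m → Matrix (Fin n) (Fin n) ℝ) (b : Fin m → ℝ) :
    Set (Matrix (Fin n) (Fin n) ℝ) := {X | X.PosSemidef ∧ calA A X = b}

/-- The dual functional `φ(y,Z) = −½‖Z + A*y‖² + ⟨y, b − A(W)⟩ − ⟨Z, W⟩`. -/
def dualPhi {n m : ℕ} (A : Fin m → Matrix (Fin n) (Fin n) ℝ) (b : Fin m → ℝ)
    (W : Matrix (Fin n) (Fin n) ℝ) (y : Fin m → ℝ) (Z : Matrix (Fin n) (Fin n) ℝ) : ℝ :=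
  -(1 / 2) * frobSq (Z + adjA A y) + (∑ i, y i * (b i - calA A W i)) - (Z * W).trace


/-! For symmetric `M`, the variational inequality characterising nearest points of convex sets
together with the self-duality of the PSD cone gives the Moreau decomposition
`M = P₊ M + P₋ M`, `⟨P₋ M, P₊ M⟩ = 0`. For `A X = b` and symmetric `Z` the duality gap is

  `½‖X - W‖² - φ(y, Z) = ½‖X - W - A*y - Z‖² + ⟨Z, X⟩`,

so a dual pair `(y, Z ⪰ 0)` attains the value at `X ∈ F` exactly when `(X, y, Z)` is a KKT
triple. A KKT triple makes `X` the projection of `W + A*y` onto `Sⁿ₊`, since `W + A*y - X = -Z`;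
conversely, by Moreau, `(P₊(W + A*y), y, -P₋(W + A*y))` is a KKT triple as soon as
`A(P₊(W + A*y)) = b`. Finally, for a KKT triple, `‖X - W‖² + ‖Y - X‖² ≤ ‖Y - W‖²` on `F`,
which gives optimality and uniqueness. -/

section FrobeniusInner

variable {m n : Type*} [Fintype m] [Fintype n]

def frobInner (X Y : Matrix m n ℝ) : ℝ := (Xᵀ * Y).trace

lemma frobInner_comm (X Y : Matrix m n ℝ) : frobInner X Y = frobInner Y X := by
  rw [frobInner, frobInner, ← trace_transpose, transpose_mul, transpose_transpose]

lemma frobInner_add_left (X Y Z : Matrix m n ℝ) :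
    frobInner (X + Y) Z = frobInner X Z + frobInner Y Z := by
  simp [frobInner, Matrix.add_mul]

lemma frobInner_add_right (X Y Z : Matrix m n ℝ) :
    frobInner X (Y + Z) = frobInner X Y + frobInner X Z := by
  simp [frobInner, Matrix.mul_add]

lemma frobInner_sub_left (X Y Z : Matrix m n ℝ) :
    frobInner (X - Y) Z = frobInner X Z - frobInner Y Z := by
  simp [frobInner, Matrix.sub_mul]

lemma frobInner_sub_right (X Y Z : Matrix m n ℝ) :
    frobInner X (Y - Z) = frobInner X Y - frobInner X Z := by
  simp [frobInner, Matrix.mul_sub]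

lemma frobInner_neg_left (X Y : Matrix m n ℝ) : frobInner (-X) Y = -frobInner X Y := by
  simp [frobInner]

lemma frobInner_neg_right (X Y : Matrix m n ℝ) : frobInner X (-Y) = -frobInner X Y := by
  simp [frobInner]

lemma frobInner_smul_left (c : ℝ) (X Y : Matrix m n ℝ) :
    frobInner (c • X) Y = c * frobInner X Y := by
  simp [frobInner]

lemma frobInner_smul_right (c : ℝ) (X Y : Matrix m n ℝ) :
    frobInner X (c • Y) = c * frobInner X Y := by
  simp [frobInner]

lemma frobInner_sum_right {ι : Type*} (s : Finset ι) (X : Matrix m n ℝ)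
    (Y : ι → Matrix m n ℝ) : frobInner X (∑ i ∈ s, Y i) = ∑ i ∈ s, frobInner X (Y i) := by
  simp [frobInner, Matrix.mul_sum, trace_sum]

lemma frobInner_sum_left {ι : Type*} (s : Finset ι) (X : ι → Matrix m n ℝ)
    (Y : Matrix m n ℝ) : frobInner (∑ i ∈ s, X i) Y = ∑ i ∈ s, frobInner (X i) Y := by
  simp [frobInner, transpose_sum, Matrix.sum_mul, trace_sum]

end FrobeniusInner

section PosSemidef

variable {n : Type*}

lemma convex_posSemidef : Convex ℝ {Y : Matrix n n ℝ | Y.PosSemidef} :=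
  fun _ hX _ hY _ _ ha hb _ => (hX.smul ha).add (hY.smul hb)

lemma convex_neg_posSemidef : Convex ℝ {Y : Matrix n n ℝ | (-Y).PosSemidef} :=
  fun _ hX _ hY _ _ ha hb _ => by
    show (-(_ + _ : Matrix n n ℝ)).PosSemidef
    rw [neg_add, ← smul_neg, ← smul_neg]
    exact (hX.smul ha).add (hY.smul hb)

variable [Fintype n]

lemma frobInner_eq_trace_mul {X : Matrix n n ℝ} (hX : X.IsSymm) (Y : Matrix n n ℝ) :
    frobInner X Y = (X * Y).trace := by
  rw [frobInner, hX.eq]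

lemma frobInner_vecMulVec_self (X : Matrix n n ℝ) (x : n → ℝ) :
    frobInner X (vecMulVec x x) = x ⬝ᵥ (X *ᵥ x) := by
  rw [frobInner, mul_vecMulVec, trace_vecMulVec, mulVec_transpose, ← dotProduct_mulVec]

lemma Matrix.PosSemidef.frobInner_nonneg {X Y : Matrix n n ℝ} (hX : X.PosSemidef)
    (hY : Y.PosSemidef) : 0 ≤ frobInner X Y := by
  obtain ⟨r, v, rfl⟩ := posSemidef_iff_eq_sum_vecMulVec.mp hY
  rw [frobInner_sum_right]
  refine Finset.sum_nonneg fun i _ => ?_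
  simpa [frobInner_vecMulVec_self] using hX.dotProduct_mulVec_nonneg (v i)

lemma Matrix.IsSymm.neg_posSemidef_of_frobInner_nonpos {X : Matrix n n ℝ} (hX : X.IsSymm)
    (h : ∀ Y : Matrix n n ℝ, Y.PosSemidef → frobInner X Y ≤ 0) : (-X).PosSemidef := by
  refine .of_dotProduct_mulVec_nonneg ?_ fun x => ?_
  · exact isHermitian_iff_isSymm.mpr hX.neg
  · have := h _ (posSemidef_vecMulVec_self_star x)
    simp only [star_trivial, frobInner_vecMulVec_self] at this
    simpa [neg_mulVec] using this

end PosSemidef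

section frobSq

variable {k : ℕ}

lemma frobSq_eq_frobInner (X : Matrix (Fin k) (Fin k) ℝ) : frobSq X = frobInner X X := rfl

lemma frobSq_nonneg (X : Matrix (Fin k) (Fin k) ℝ) : 0 ≤ frobSq X := by
  simpa [frobSq, conjTranspose_eq_transpose_of_trivial] using
    (posSemidef_conjTranspose_mul_self X).trace_nonneg

lemma frobSq_eq_zero_iff {X : Matrix (Fin k) (Fin k) ℝ} : frobSq X = 0 ↔ X = 0 := by
  rw [frobSq, ← conjTranspose_eq_transpose_of_trivial]
  exact trace_conjTranspose_mul_self_eq_zero_iff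

lemma frobSq_add (X Y : Matrix (Fin k) (Fin k) ℝ) :
    frobSq (X + Y) = frobSq X + 2 * frobInner X Y + frobSq Y := by
  simp only [frobSq_eq_frobInner, frobInner_add_left, frobInner_add_right, frobInner_comm Y X]
  ring

lemma frobSq_sub (X Y : Matrix (Fin k) (Fin k) ℝ) :
    frobSq (X - Y) = frobSq X - 2 * frobInner X Y + frobSq Y := by
  simp only [frobSq_eq_frobInner, frobInner_sub_left, frobInner_sub_right, frobInner_comm Y X]
  ring

lemma frobSq_smul (c : ℝ) (X : Matrix (Fin k) (Fin k) ℝ) : frobSq (c • X) = c ^ 2 * frobSq X := by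
  simp only [frobSq_eq_frobInner, frobInner_smul_left, frobInner_smul_right]
  ring

end frobSq

lemma nonpos_of_forall_two_mul_le {c d : ℝ} (hd : 0 ≤ d)
    (h : ∀ t : ℝ, 0 < t → t ≤ 1 → 2 * t * c ≤ t ^ 2 * d) : c ≤ 0 := by
  by_contra! hc
  have ht := h (c / (c + d)) (by positivity) ((div_le_one (by positivity)).mpr (by linarith))
  field_simp at ht
  nlinarith

section IsProjOn

variable {k : ℕ} {C : Set (Matrix (Fin k) (Fin k) ℝ)} {M P Q : Matrix (Fin k) (Fin k) ℝ}

lemma IsProjOn.frobInner_sub_nonpos (hC : Convex ℝ C) (hP : IsProjOn C M P)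
    {Y : Matrix (Fin k) (Fin k) ℝ} (hY : Y ∈ C) : frobInner (M - P) (Y - P) ≤ 0 := by
  refine nonpos_of_forall_two_mul_le (frobSq_nonneg (Y - P)) fun t ht0 ht1 => ?_
  have hle := hP.2 _ (hC.add_smul_sub_mem hP.1 hY ⟨ht0.le, ht1⟩)
  rw [show M - (P + t • (Y - P)) = (M - P) - t • (Y - P) by abel, frobSq_sub (M - P),
    frobInner_smul_right, frobSq_smul] at hle
  linarith

lemma isProjOn_of_frobInner_sub_nonpos (hP : P ∈ C)
    (h : ∀ Y ∈ C, frobInner (M - P) (Y - P) ≤ 0) : IsProjOn C M P := by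
  refine ⟨hP, fun Y hY => ?_⟩
  rw [show M - Y = (M - P) - (Y - P) by abel, frobSq_sub (M - P)]
  linarith [h Y hY, frobSq_nonneg (Y - P)]

lemma IsProjOn.eq (hC : Convex ℝ C) (hP : IsProjOn C M P) (hQ : IsProjOn C M Q) : P = Q := by
  have h₁ := hP.frobInner_sub_nonpos hC hQ.1
  have h₂ := hQ.frobInner_sub_nonpos hC hP.1
  rw [show Q - P = -(P - Q) by abel, frobInner_neg_right] at h₁
  have : frobSq (P - Q) ≤ 0 :=
    calc frobSq (P - Q) = frobInner ((M - Q) - (M - P)) (P - Q) := by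
          rw [frobSq_eq_frobInner]; congr 1; abel
      _ = frobInner (M - Q) (P - Q) - frobInner (M - P) (P - Q) := frobInner_sub_left ..
      _ ≤ 0 := by linarith
  exact sub_eq_zero.mp (frobSq_eq_zero_iff.mp (le_antisymm this (frobSq_nonneg _)))

end IsProjOn

section Moreau

variable {k : ℕ} {M P N : Matrix (Fin k) (Fin k) ℝ}

lemma IsProjOn.frobInner_sub_self_eq_zero (hP : IsProjOn {Y | Y.PosSemidef} M P) :
    frobInner (M - P) P = 0 := by
  have h₀ := hP.frobInner_sub_nonpos convex_posSemidef PosSemidef.zero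
  have h₂ := hP.frobInner_sub_nonpos convex_posSemidef (hP.1.add hP.1)
  rw [zero_sub, frobInner_neg_right] at h₀
  rw [add_sub_cancel_right] at h₂
  linarith

lemma IsProjOn.neg_sub_posSemidef (hM : M.IsSymm) (hP : IsProjOn {Y | Y.PosSemidef} M P) :
    (-(M - P)).PosSemidef :=
  (hM.sub (isHermitian_iff_isSymm.mp hP.1.1)).neg_posSemidef_of_frobInner_nonpos fun Y hY => by
    simpa using hP.frobInner_sub_nonpos convex_posSemidef (hP.1.add hY)

theorem IsProjOn.eq_sub_of_posSemidef (hM : M.IsSymm) (hP : IsProjOn {Y | Y.PosSemidef} M P)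
    (hN : IsProjOn {Y | (-Y).PosSemidef} M N) : N = M - P := by
  refine hN.eq convex_neg_posSemidef <|
    isProjOn_of_frobInner_sub_nonpos (hP.neg_sub_posSemidef hM) fun Y hY => ?_
  have hPY := hP.1.frobInner_nonneg hY
  rw [frobInner_neg_right] at hPY
  rw [sub_sub_cancel, frobInner_sub_right, frobInner_comm P (M - P),
    hP.frobInner_sub_self_eq_zero]
  linarith

end Moreau

section KKT

variable {n m : ℕ} {A : Fin m → Matrix (Fin n) (Fin n) ℝ} {b : Fin m → ℝ}
  {W X Y Z P N : Matrix (Fin n) (Fin n) ℝ} {y : Fin m → ℝ}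

lemma calA_sub (A : Fin m → Matrix (Fin n) (Fin n) ℝ) (X Y : Matrix (Fin n) (Fin n) ℝ) :
    calA A (X - Y) = calA A X - calA A Y := by
  ext i
  simp [calA, Matrix.mul_sub]

lemma frobInner_adjA (hA : ∀ i, (A i).IsSymm) (y : Fin m → ℝ) (X : Matrix (Fin n) (Fin n) ℝ) :
    frobInner (adjA A y) X = y ⬝ᵥ calA A X := by
  simp [adjA, calA, frobInner_sum_left, frobInner_smul_left, frobInner_eq_trace_mul (hA _),
    dotProduct]

lemma isSymm_adjA (hA : ∀ i, (A i).IsSymm) (y : Fin m → ℝ) : (adjA A y).IsSymm := by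
  simp only [adjA, IsSymm, transpose_sum, transpose_smul, fun i => (hA i).eq]

def IsKKT (A : Fin m → Matrix (Fin n) (Fin n) ℝ) (b : Fin m → ℝ) (W X : Matrix (Fin n) (Fin n) ℝ)
    (y : Fin m → ℝ) (Z : Matrix (Fin n) (Fin n) ℝ) : Prop :=
  X - W - adjA A y - Z = 0 ∧ Z.PosSemidef ∧ calA A X = b ∧ X.PosSemidef ∧ (Z * X).trace = 0

lemma half_frobSq_sub_dualPhi (hA : ∀ i, (A i).IsSymm) (hZ : Z.IsSymm) (hX : calA A X = b) :
    1 / 2 * frobSq (X - W) - dualPhi A b W y Z =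
      1 / 2 * frobSq (X - W - adjA A y - Z) + (Z * X).trace := by
  have hb : ∑ i, y i * (b i - calA A W i) = frobInner (adjA A y) (X - W) := by
    rw [frobInner_adjA hA, calA_sub, hX]
    rfl
  have hZW : (Z * W).trace = (Z * X).trace - frobInner Z (X - W) := by
    rw [frobInner_sub_right, frobInner_eq_trace_mul hZ, frobInner_eq_trace_mul hZ]
    ring
  rw [dualPhi, hb, hZW, show X - W - adjA A y - Z = (X - W) - (Z + adjA A y) by abel,
    frobSq_sub (X - W), frobInner_add_right, frobInner_comm (X - W) Z,
    frobInner_comm (X - W) (adjA A y)]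
  ring

namespace IsKKT

lemma mem_spectra (h : IsKKT A b W X y Z) : X ∈ spectra A b := ⟨h.2.2.2.1, h.2.2.1⟩

lemma dualPhi_eq (hA : ∀ i, (A i).IsSymm) (h : IsKKT A b W X y Z) :
    dualPhi A b W y Z = 1 / 2 * frobSq (X - W) := by
  obtain ⟨hstat, hZ, hXb, -, hcomp⟩ := h
  have hgap := half_frobSq_sub_dualPhi (W := W) (y := y) hA (isHermitian_iff_isSymm.mp hZ.1) hXb
  rw [hstat, hcomp, (frobSq_eq_zero_iff (X := 0)).mpr rfl] at hgap
  linarith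

lemma isProjOn (h : IsKKT A b W X y Z) : IsProjOn {Y | Y.PosSemidef} (W + adjA A y) X := by
  obtain ⟨hstat, hZ, -, hX, hcomp⟩ := h
  refine isProjOn_of_frobInner_sub_nonpos hX fun Y hY => ?_
  have hMX : W + adjA A y - X = -Z := by
    rw [eq_neg_iff_add_eq_zero, ← neg_eq_zero, ← hstat]
    abel
  rw [hMX, frobInner_neg_left, frobInner_sub_right,
    frobInner_eq_trace_mul (isHermitian_iff_isSymm.mp hZ.1) X, hcomp]
  linarith [hZ.frobInner_nonneg hY]

lemma frobSq_add_le (hA : ∀ i, (A i).IsSymm) (h : IsKKT A b W X y Z) (hY : Y ∈ spectra A b) :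
    frobSq (X - W) + frobSq (Y - X) ≤ frobSq (Y - W) := by
  obtain ⟨hstat, hZ, hXb, -, hcomp⟩ := h
  have hXW : X - W = adjA A y + Z := by
    rw [← sub_eq_zero, ← hstat]
    abel
  have hcross : 0 ≤ frobInner (X - W) (Y - X) := by
    rw [hXW, frobInner_add_left, frobInner_adjA hA, calA_sub, hY.2, hXb, sub_self,
      dotProduct_zero, frobInner_sub_right,
      frobInner_eq_trace_mul (isHermitian_iff_isSymm.mp hZ.1) X, hcomp]
    linarith [hZ.frobInner_nonneg hY.1]
  rw [show Y - W = (X - W) + (Y - X) by abel, frobSq_add (X - W)]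
  linarith

lemma frobSq_le (hA : ∀ i, (A i).IsSymm) (h : IsKKT A b W X y Z) (hY : Y ∈ spectra A b) :
    frobSq (X - W) ≤ frobSq (Y - W) := by
  linarith [h.frobSq_add_le hA hY, frobSq_nonneg (Y - X)]

lemma eq_of_frobSq_le (hA : ∀ i, (A i).IsSymm) (h : IsKKT A b W X y Z) (hY : Y ∈ spectra A b)
    (hle : frobSq (Y - W) ≤ frobSq (X - W)) : Y = X := by
  have : frobSq (Y - X) ≤ 0 := by linarith [h.frobSq_add_le hA hY]
  exact sub_eq_zero.mp (frobSq_eq_zero_iff.mp (le_antisymm this (frobSq_nonneg _)))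

end IsKKT

lemma isKKT_of_dualPhi_eq (hA : ∀ i, (A i).IsSymm) (hX : X ∈ spectra A b) (hZ : Z.PosSemidef)
    (h : dualPhi A b W y Z = 1 / 2 * frobSq (X - W)) : IsKKT A b W X y Z := by
  have hgap := half_frobSq_sub_dualPhi (W := W) (y := y) hA (isHermitian_iff_isSymm.mp hZ.1) hX.2
  have hZX : 0 ≤ (Z * X).trace :=
    frobInner_eq_trace_mul (isHermitian_iff_isSymm.mp hZ.1) X ▸ hZ.frobInner_nonneg hX.1
  have hres := frobSq_nonneg (X - W - adjA A y - Z)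
  exact ⟨frobSq_eq_zero_iff.mp (by linarith), hZ, hX.2, hX.1, by linarith⟩

lemma isKKT_of_isProjOn (hA : ∀ i, (A i).IsSymm) (hW : W.IsSymm)
    (hP : IsProjOn {Y | Y.PosSemidef} (W + adjA A y) P)
    (hN : IsProjOn {Y | (-Y).PosSemidef} (W + adjA A y) N) (hroot : calA A P = b) :
    IsKKT A b W P y (-N) := by
  have hM := hW.add (isSymm_adjA hA y)
  have hNP := hP.eq_sub_of_posSemidef hM hN
  refine ⟨by rw [hNP]; abel, hN.1, hroot, hP.1, ?_⟩
  rw [← frobInner_eq_trace_mul (isHermitian_iff_isSymm.mp hN.1.1), hNP, frobInner_neg_left,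
    hP.frobInner_sub_self_eq_zero, neg_zero]

end KKT

theorem stmt8_general {n m : ℕ} (A : Fin m → Matrix (Fin n) (Fin n) ℝ)
    (hA : ∀ i, (A i).IsSymm) (b : Fin m → ℝ)
    (W : Matrix (Fin n) (Fin n) ℝ) (hW : W.IsSymm)
    -- the nearest-point projections onto `Sⁿ₊` and onto `Sⁿ₋ = −Sⁿ₊`:
    (Pp Np : Matrix (Fin n) (Fin n) ℝ → Matrix (Fin n) (Fin n) ℝ)
    (hPp : ∀ M, IsProjOn {Y : Matrix (Fin n) (Fin n) ℝ | Y.PosSemidef} M (Pp M))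
    (hNp : ∀ M, IsProjOn {Y : Matrix (Fin n) (Fin n) ℝ | (-Y).PosSemidef} M (Np M))
    (pstar : ℝ)
    (hp : IsLeast {v : ℝ | ∃ X ∈ spectra A b, v = (1 / 2) * frobSq (X - W)} pstar) :
    -- (i) strong duality ↔ F has a root
    ((∃ (y : Fin m → ℝ) (Z : Matrix (Fin n) (Fin n) ℝ), Z.PosSemidef ∧
        dualPhi A b W y Z = pstar) ↔
      (∃ ybar : Fin m → ℝ, calA A (Pp (W + adjA A ybar)) = b)) ∧
    -- (ii) for any root `ȳ`, `X* = P_{Sⁿ₊}(W + A*ȳ)` is the (unique) optimal solution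
    (∀ ybar : Fin m → ℝ, calA A (Pp (W + adjA A ybar)) = b →
      Pp (W + adjA A ybar) ∈ spectra A b ∧
      (∀ Y ∈ spectra A b,
        (1 / 2) * frobSq (Pp (W + adjA A ybar) - W) ≤ (1 / 2) * frobSq (Y - W)) ∧
      -- uniqueness of the optimal solution
      (∀ X' ∈ spectra A b,
        (∀ Y ∈ spectra A b, (1 / 2) * frobSq (X' - W) ≤ (1 / 2) * frobSq (Y - W)) →
          X' = Pp (W + adjA A ybar))) ∧
    -- (iii) `ȳ` is a root of `F` iff `(X̄, ȳ, Z̄)` satisfies the KKT conditions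
    (∀ ybar : Fin m → ℝ,
      (calA A (Pp (W + adjA A ybar)) = b) ↔
      (Pp (W + adjA A ybar) - W - adjA A ybar - (-(Np (W + adjA A ybar))) = 0 ∧
        (-(Np (W + adjA A ybar))).PosSemidef ∧
        calA A (Pp (W + adjA A ybar)) = b ∧
        (Pp (W + adjA A ybar)).PosSemidef ∧
        ((-(Np (W + adjA A ybar))) * Pp (W + adjA A ybar)).trace = 0)) := by
  have hKKT : ∀ y, calA A (Pp (W + adjA A y)) = b →
      IsKKT A b W (Pp (W + adjA A y)) y (-(Np (W + adjA A y))) :=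
    fun y => isKKT_of_isProjOn hA hW (hPp _) (hNp _)
  obtain ⟨X₀, hX₀, rfl⟩ := hp.1
  have hopt : ∀ y, calA A (Pp (W + adjA A y)) = b → ∀ Y ∈ spectra A b,
      1 / 2 * frobSq (Pp (W + adjA A y) - W) ≤ 1 / 2 * frobSq (Y - W) := fun y hy Y hY => by
    linarith [(hKKT y hy).frobSq_le hA hY]
  refine ⟨⟨?_, ?_⟩, fun y hy => ⟨(hKKT y hy).mem_spectra, hopt y hy, fun X hX hXopt => ?_⟩,
    fun y => ⟨hKKT y, fun h => h.2.2.1⟩⟩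
  · rintro ⟨y, Z, hZ, hdual⟩
    have h := isKKT_of_dualPhi_eq hA hX₀ hZ hdual
    exact ⟨y, (hPp _).eq convex_posSemidef h.isProjOn ▸ hX₀.2⟩
  · rintro ⟨y, hy⟩
    refine ⟨y, -(Np (W + adjA A y)), (hNp _).1, ?_⟩
    rw [(hKKT y hy).dualPhi_eq hA]
    exact le_antisymm (hopt y hy X₀ hX₀) (hp.2 ⟨_, (hKKT y hy).mem_spectra, rfl⟩)
  · exact (hKKT y hy).eq_of_frobSq_le hA hX (by linarith [hXopt _ (hKKT y hy).mem_spectra])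

/-- strong duality (zero duality gap and dual attainment) holds for the best
approximation problem iff `F(y) = A(P_{Sⁿ₊}(W + A*y)) − b` has a root `ȳ`; in that case the
unique optimal solution is `X* = P_{Sⁿ₊}(W + A*ȳ)`; and `ȳ` is a root of `F` iff the triple
`(X̄, ȳ, Z̄)` with `X̄ = P_{Sⁿ₊}(W + A*ȳ)`, `Z̄ = −P_{Sⁿ₋}(W + A*ȳ)` satisfies the KKT
conditions. -/
theorem stmt8 {n m : ℕ} (A : Fin m → Matrix (Fin n) (Fin n) ℝ)
    (hA : ∀ i, (A i).IsSymm) (hLI : LinearIndependent ℝ A) (b : Fin m → ℝ)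
    (hFne : (spectra A b).Nonempty)
    (W : Matrix (Fin n) (Fin n) ℝ) (hW : W.IsSymm)
    -- the nearest-point projections onto `Sⁿ₊` and onto `Sⁿ₋ = −Sⁿ₊`:
    (Pp Np : Matrix (Fin n) (Fin n) ℝ → Matrix (Fin n) (Fin n) ℝ)
    (hPp : ∀ M, IsProjOn {Y : Matrix (Fin n) (Fin n) ℝ | Y.PosSemidef} M (Pp M))
    (hNp : ∀ M, IsProjOn {Y : Matrix (Fin n) (Fin n) ℝ | (-Y).PosSemidef} M (Np M))
    (pstar : ℝ)
    (hp : IsLeast {v : ℝ | ∃ X ∈ spectra A b, v = (1 / 2) * frobSq (X - W)} pstar) :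
    -- (i) strong duality ↔ F has a root
    ((∃ (y : Fin m → ℝ) (Z : Matrix (Fin n) (Fin n) ℝ), Z.PosSemidef ∧
        dualPhi A b W y Z = pstar) ↔
      (∃ ybar : Fin m → ℝ, calA A (Pp (W + adjA A ybar)) = b)) ∧
    -- (ii) for any root `ȳ`, `X* = P_{Sⁿ₊}(W + A*ȳ)` is the (unique) optimal solution
    (∀ ybar : Fin m → ℝ, calA A (Pp (W + adjA A ybar)) = b →
      Pp (W + adjA A ybar) ∈ spectra A b ∧
      (∀ Y ∈ spectra A b,
        (1 / 2) * frobSq (Pp (W + adjA A ybar) - W) ≤ (1 / 2) * frobSq (Y - W)) ∧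
      -- uniqueness of the optimal solution
      (∀ X' ∈ spectra A b,
        (∀ Y ∈ spectra A b, (1 / 2) * frobSq (X' - W) ≤ (1 / 2) * frobSq (Y - W)) →
          X' = Pp (W + adjA A ybar))) ∧
    -- (iii) `ȳ` is a root of `F` iff `(X̄, ȳ, Z̄)` satisfies the KKT conditions
    (∀ ybar : Fin m → ℝ,
      (calA A (Pp (W + adjA A ybar)) = b) ↔
      (Pp (W + adjA A ybar) - W - adjA A ybar - (-(Np (W + adjA A ybar))) = 0 ∧
        (-(Np (W + adjA A ybar))).PosSemidef ∧
        calA A (Pp (W + adjA A ybar)) = b ∧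
        (Pp (W + adjA A ybar)).PosSemidef ∧
        ((-(Np (W + adjA A ybar))) * Pp (W + adjA A ybar)).trace = 0)) :=
  stmt8_general A hA b W hW Pp Np hPp hNp pstar hp
end
end

section
/- Let X₁, X₂ ∈ F = {X ⪰ 0 : A(X) = b} and suppose X₁ is a nondegenerate point of F. Then for every γ ∈ (0, 1], the point γX₁ + (1 − γ)X₂ is a nondegenerate point of F. -/
open Matrix Set

noncomputable section

/-- The PSD cone `Sⁿ₊` as a subset of matrix space. -/
def PSDcone (n : ℕ) : Set (Matrix (Fin n) (Fin n) ℝ) := {Y | Y.PosSemidef}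

/-- `f` is a face of the convex cone `K`. -/
def IsFaceOfCone {k : ℕ} (f K : Set (Matrix (Fin k) (Fin k) ℝ)) : Prop :=
  f ⊆ K ∧ Convex ℝ f ∧ (∀ c : ℝ, 0 ≤ c → ∀ x ∈ f, c • x ∈ f) ∧
    ∀ x ∈ K, ∀ y ∈ K, x + y ∈ f → x ∈ f ∧ y ∈ f

/-- `face(X, Sⁿ₊)`: the minimal face of `Sⁿ₊` containing `X`, i.e. the intersection of
all faces of `Sⁿ₊` containing `X`. -/
def minFaceOfPoint {n : ℕ} (X : Matrix (Fin n) (Fin n) ℝ) :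
    Set (Matrix (Fin n) (Fin n) ℝ) :=
  ⋂₀ {g | IsFaceOfCone g (PSDcone n) ∧ X ∈ g}

/-- The conjugate face `f^Δ = f^⊥ ∩ Sⁿ₊` of a subset `f` of `Sⁿ₊`. -/
def conjFace {n : ℕ} (f : Set (Matrix (Fin n) (Fin n) ℝ)) :
    Set (Matrix (Fin n) (Fin n) ℝ) :=
  {Z | Z.PosSemidef ∧ ∀ Y ∈ f, (Y * Z).trace = 0}

/-- `X` is a nondegenerate point: `span(face(X,Sⁿ₊)^Δ) ∩ range(A*) = {0}`. -/
def Nondegenerate {n m : ℕ} (A : Fin m → Matrix (Fin n) (Fin n) ℝ)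
    (X : Matrix (Fin n) (Fin n) ℝ) : Prop :=
  Submodule.span ℝ (conjFace (minFaceOfPoint X)) ⊓ Submodule.span ℝ (Set.range A) = ⊥


/-!
For PSD `X`, the conjugate face of `face(X, Sⁿ₊)` is `{Z ⪰ 0 : ⟨X, Z⟩ = 0}`: one inclusion because
`X` lies in its own minimal face, the other because `{Y ⪰ 0 : ⟨Y, Z⟩ = 0}` is a face of `Sⁿ₊` for
every `Z ⪰ 0`. Since `⟨·, Z⟩` is nonnegative on `Sⁿ₊`, `⟨γX₁ + (1 - γ)X₂, Z⟩ = 0` with `γ > 0`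
forces `⟨X₁, Z⟩ = 0`. Hence the conjugate face at the convex combination is contained in the one at
`X₁`, and a smaller span meets `range(A*)` in no more than `{0}`.
-/

open scoped MatrixOrder ComplexOrder in
theorem Matrix.PosSemidef.trace_mul_nonneg_s14 {ι 𝕜 : Type*} [Fintype ι] [RCLike 𝕜]
    {X Z : Matrix ι ι 𝕜} (hX : X.PosSemidef) (hZ : Z.PosSemidef) : 0 ≤ (X * Z).trace := by
  classical
  obtain ⟨B, rfl⟩ := CStarAlgebra.nonneg_iff_eq_star_mul_self.mp hX.nonneg
  rw [mul_assoc, trace_mul_comm]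
  exact (hZ.mul_mul_conjTranspose_same B).trace_nonneg

section Faces

variable {n : ℕ}

theorem isFaceOfCone_setOf_trace_mul_eq_zero {Z : Matrix (Fin n) (Fin n) ℝ}
    (hZ : Z.PosSemidef) :
    IsFaceOfCone {Y | Y.PosSemidef ∧ (Y * Z).trace = 0} (PSDcone n) := by
  refine ⟨fun Y hY => hY.1, ?convex, ?smul, ?extreme⟩
  case convex =>
    rintro X ⟨hX, hXZ⟩ Y ⟨hY, hYZ⟩ a b ha hb -
    refine ⟨(hX.smul ha).add (hY.smul hb), ?_⟩
    simp [add_mul, hXZ, hYZ]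
  case smul =>
    rintro c hc X ⟨hX, hXZ⟩
    exact ⟨hX.smul hc, by simp [hXZ]⟩
  case extreme =>
    rintro X hX Y hY ⟨-, hsum⟩
    have hXZ := hX.trace_mul_nonneg_s14 hZ
    have hYZ := hY.trace_mul_nonneg_s14 hZ
    rw [add_mul, trace_add] at hsum
    exact ⟨⟨hX, by linarith⟩, ⟨hY, by linarith⟩⟩

theorem mem_minFaceOfPoint_self (X : Matrix (Fin n) (Fin n) ℝ) : X ∈ minFaceOfPoint X :=
  fun _ hg => hg.2

theorem mem_conjFace_minFaceOfPoint_iff {X Z : Matrix (Fin n) (Fin n) ℝ} (hX : X.PosSemidef) :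
    Z ∈ conjFace (minFaceOfPoint X) ↔ Z.PosSemidef ∧ (X * Z).trace = 0 := by
  refine ⟨fun hZ => ⟨hZ.1, hZ.2 X (mem_minFaceOfPoint_self X)⟩, ?_⟩
  rintro ⟨hZ, hXZ⟩
  refine ⟨hZ, fun Y hY => ?_⟩
  have hface : minFaceOfPoint X ⊆ {Y | Y.PosSemidef ∧ (Y * Z).trace = 0} :=
    sInter_subset_of_mem ⟨isFaceOfCone_setOf_trace_mul_eq_zero hZ, hX, hXZ⟩
  exact (hface hY).2

theorem conjFace_minFaceOfPoint_smul_add_smul_subset {X Y : Matrix (Fin n) (Fin n) ℝ}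
    (hX : X.PosSemidef) (hY : Y.PosSemidef) {a b : ℝ} (ha : 0 < a) (hb : 0 ≤ b) :
    conjFace (minFaceOfPoint (a • X + b • Y)) ⊆ conjFace (minFaceOfPoint X) := by
  intro Z hZ
  obtain ⟨hZ, hsum⟩ :=
    (mem_conjFace_minFaceOfPoint_iff ((hX.smul ha.le).add (hY.smul hb))).mp hZ
  simp only [add_mul, trace_add, smul_mul, trace_smul, smul_eq_mul] at hsum
  have hXZ := hX.trace_mul_nonneg_s14 hZ
  have hYZ := hY.trace_mul_nonneg_s14 hZ
  exact (mem_conjFace_minFaceOfPoint_iff hX).mpr ⟨hZ, by nlinarith [mul_nonneg hb hYZ]⟩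

theorem Nondegenerate.of_conjFace_subset {m : ℕ} {A : Fin m → Matrix (Fin n) (Fin n) ℝ}
    {X Y : Matrix (Fin n) (Fin n) ℝ} (hX : Nondegenerate A X)
    (hsub : conjFace (minFaceOfPoint Y) ⊆ conjFace (minFaceOfPoint X)) :
    Nondegenerate A Y :=
  le_bot_iff.mp (hX ▸ inf_le_inf_right _ (Submodule.span_mono hsub))

end Faces

theorem stmt14_general {n m : ℕ} (A : Fin m → Matrix (Fin n) (Fin n) ℝ)
    (b : Fin m → ℝ)
    (X₁ X₂ : Matrix (Fin n) (Fin n) ℝ)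
    (hX₁ : X₁ ∈ spectra A b) (hX₂ : X₂ ∈ spectra A b)
    (hnd : Nondegenerate A X₁)
    (γ : ℝ) (hγ : γ ∈ Set.Ioc (0 : ℝ) 1) :
    Nondegenerate A (γ • X₁ + (1 - γ) • X₂) :=
  hnd.of_conjFace_subset <|
    conjFace_minFaceOfPoint_smul_add_smul_subset hX₁.1 hX₂.1 hγ.1 (sub_nonneg.mpr hγ.2)

/-- if `X₁, X₂ ∈ F` and `X₁` is nondegenerate, then every point
`γ X₁ + (1 − γ) X₂` with `γ ∈ (0, 1]` is a nondegenerate point of `F`. -/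
theorem stmt14 {n m : ℕ} (A : Fin m → Matrix (Fin n) (Fin n) ℝ)
    (hA : ∀ i, (A i).IsSymm) (hLI : LinearIndependent ℝ A) (b : Fin m → ℝ)
    (X₁ X₂ : Matrix (Fin n) (Fin n) ℝ)
    (hX₁ : X₁ ∈ spectra A b) (hX₂ : X₂ ∈ spectra A b)
    (hnd : Nondegenerate A X₁)
    (γ : ℝ) (hγ : γ ∈ Set.Ioc (0 : ℝ) 1) :
    Nondegenerate A (γ • X₁ + (1 - γ) • X₂) :=
  stmt14_general A b X₁ X₂ hX₁ hX₂ hnd γ hγ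
end
end

section
/- Let f be a face of the spectrahedron F = {X ⪰ 0 : A(X) = b} that contains a nondegenerate point of F. Then every point in the relative interior of f is a nondegenerate point of F. -/
open Matrix Set

noncomputable section

/-- `f` is a face of the convex set `C`: a convex subset such that whenever a point of `f`
lies in the open segment between two points of `C`, both endpoints belong to `f`. -/
def IsFaceOfConvexSet {n : ℕ} (f C : Set (Matrix (Fin n) (Fin n) ℝ)) : Prop :=
  f ⊆ C ∧ Convex ℝ f ∧
    ∀ x ∈ C, ∀ y ∈ C, ∀ t : ℝ, t ∈ Set.Ioo (0 : ℝ) 1 →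
      t • x + (1 - t) • y ∈ f → x ∈ f ∧ y ∈ f

/-! If `X` lies in the relative interior of `f` and `Y ∈ f`, then `X` is an interior point of a
segment from `Y` to some `Z ∈ f ⊆ Sⁿ₊`. Faces of `Sⁿ₊` are cones closed under splitting sums, so
`Y ∈ face(X, Sⁿ₊)`, whence `face(Y, Sⁿ₊) ⊆ face(X, Sⁿ₊)`. Taking conjugate faces reverses this
inclusion, so `span(face(X, Sⁿ₊)^Δ) ∩ range(A*)` sits inside the corresponding space for `Y`,
which is `{0}`. -/

section IntrinsicInterior

variable {E : Type*} [AddCommGroup E] [Module ℝ E] [TopologicalSpace E]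
  [IsTopologicalAddGroup E] [ContinuousSMul ℝ E]

theorem exists_mem_openSegment_of_mem_intrinsicInterior {s : Set E} {x y : E}
    (hx : x ∈ intrinsicInterior ℝ s) (hy : y ∈ s) : ∃ z ∈ s, x ∈ openSegment ℝ y z := by
  obtain ⟨x', hx', rfl⟩ := mem_intrinsicInterior.1 hx
  have hline (t : ℝ) : (x' : E) + t • ((x' : E) - y) ∈ affineSpan ℝ s := by
    simpa [vsub_eq_sub, vadd_eq_add, add_comm] using
      AffineSubspace.smul_vsub_vadd_mem _ t x'.2 (subset_affineSpan ℝ s hy) x'.2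
  let γ : ℝ → affineSpan ℝ s := fun t => ⟨_, hline t⟩
  have hγ : Continuous γ := by fun_prop
  have hnear : ∀ᶠ t in nhds (0 : ℝ), γ t ∈ interior ((↑) ⁻¹' s) :=
    hγ.continuousAt.eventually_mem (by simpa [γ] using isOpen_interior.mem_nhds hx')
  obtain ⟨δ, hδs, hδ⟩ := ((hnear.filter_mono nhdsWithin_le_nhds).and
    (self_mem_nhdsWithin : Ioi (0 : ℝ) ∈ nhdsWithin 0 (Ioi 0))).exists
  have hzs : (γ δ : E) ∈ s := interior_subset (s := ((↑) ⁻¹' s : Set (affineSpan ℝ s))) hδs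
  refine ⟨γ δ, hzs, δ / (1 + δ), 1 / (1 + δ), by positivity, by positivity,
    by field_simp; ring, ?_⟩
  have : 1 + δ ≠ 0 := by positivity
  simp only [γ]
  match_scalars
  · field_simp; ring
  · field_simp

end IntrinsicInterior

theorem PSDcone_isFaceOfCone (n : ℕ) : IsFaceOfCone (PSDcone n) (PSDcone n) :=
  ⟨subset_rfl, fun _ hx _ hy _ _ ha hb _ => (hx.smul ha).add (hy.smul hb),
    fun _ hc _ hx => hx.smul hc, fun _ hx _ hy _ => ⟨hx, hy⟩⟩

theorem minFaceOfPoint_subset_PSDcone {n : ℕ} {X : Matrix (Fin n) (Fin n) ℝ}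
    (hX : X.PosSemidef) : minFaceOfPoint X ⊆ PSDcone n :=
  sInter_subset_of_mem ⟨PSDcone_isFaceOfCone n, hX⟩

theorem minFaceOfPoint_isFaceOfCone {n : ℕ} {X : Matrix (Fin n) (Fin n) ℝ}
    (hX : X.PosSemidef) : IsFaceOfCone (minFaceOfPoint X) (PSDcone n) := by
  refine ⟨minFaceOfPoint_subset_PSDcone hX, convex_sInter fun g hg => hg.1.2.1,
    fun c hc x hx => mem_sInter.2 fun g hg => hg.1.2.2.1 c hc x (mem_sInter.1 hx g hg),
    fun x hx y hy hxy => ?_⟩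
  have hfaces : ∀ g ∈ {g | IsFaceOfCone g (PSDcone n) ∧ X ∈ g}, x ∈ g ∧ y ∈ g :=
    fun g hg => hg.1.2.2.2 x hx y hy (mem_sInter.1 hxy g hg)
  exact ⟨mem_sInter.2 fun g hg => (hfaces g hg).1, mem_sInter.2 fun g hg => (hfaces g hg).2⟩

theorem mem_minFaceOfPoint_of_mem_openSegment {n : ℕ} {X Y Z : Matrix (Fin n) (Fin n) ℝ}
    (hY : Y.PosSemidef) (hZ : Z.PosSemidef) (hX : X ∈ openSegment ℝ Y Z) :
    Y ∈ minFaceOfPoint X := by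
  obtain ⟨a, b, ha, hb, -, rfl⟩ := hX
  refine mem_sInter.2 fun g ⟨⟨_, _, hcone, hadd⟩, hXg⟩ => ?_
  have haY := (hadd _ (hY.smul ha.le) _ (hZ.smul hb.le) hXg).1
  simpa [smul_smul, inv_mul_cancel₀ ha.ne'] using hcone a⁻¹ (inv_nonneg.2 ha.le) _ haY

theorem minFaceOfPoint_subset_of_mem {n : ℕ} {X Y : Matrix (Fin n) (Fin n) ℝ}
    (hX : X.PosSemidef) (hY : Y ∈ minFaceOfPoint X) : minFaceOfPoint Y ⊆ minFaceOfPoint X :=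
  sInter_subset_of_mem ⟨minFaceOfPoint_isFaceOfCone hX, hY⟩

theorem conjFace_anti {n : ℕ} {f g : Set (Matrix (Fin n) (Fin n) ℝ)} (h : f ⊆ g) :
    conjFace g ⊆ conjFace f :=
  fun _ hZ => ⟨hZ.1, fun Y hY => hZ.2 Y (h hY)⟩

theorem Nondegenerate.of_minFaceOfPoint_subset {n m : ℕ} {A : Fin m → Matrix (Fin n) (Fin n) ℝ}
    {X Y : Matrix (Fin n) (Fin n) ℝ} (hY : Nondegenerate A Y)
    (h : minFaceOfPoint Y ⊆ minFaceOfPoint X) : Nondegenerate A X :=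
  eq_bot_iff.2 <| hY ▸ inf_le_inf_right _ (Submodule.span_mono (conjFace_anti h))

theorem stmt15_general {n m : ℕ} (A : Fin m → Matrix (Fin n) (Fin n) ℝ)
    (b : Fin m → ℝ)
    (f : Set (Matrix (Fin n) (Fin n) ℝ))
    (hface : IsFaceOfConvexSet f (spectra A b))
    (hnd : ∃ X ∈ f, Nondegenerate A X) :
    ∀ X ∈ intrinsicInterior ℝ f, Nondegenerate A X := by
  obtain ⟨Y, hYf, hYnd⟩ := hnd
  intro X hXint
  have hPSD {W} (hW : W ∈ f) : W.PosSemidef := (hface.1 hW).1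
  obtain ⟨Z, hZf, hXYZ⟩ := exists_mem_openSegment_of_mem_intrinsicInterior hXint hYf
  have hYX : Y ∈ minFaceOfPoint X :=
    mem_minFaceOfPoint_of_mem_openSegment (hPSD hYf) (hPSD hZf) hXYZ
  exact hYnd.of_minFaceOfPoint_subset
    (minFaceOfPoint_subset_of_mem (hPSD (intrinsicInterior_subset hXint)) hYX)

/-- if a face `f` of the spectrahedron `F` contains a nondegenerate point of
`F`, then every point in the relative interior of `f` is a nondegenerate point of `F`. -/
theorem stmt15 {n m : ℕ} (A : Fin m → Matrix (Fin n) (Fin n) ℝ)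
    (hA : ∀ i, (A i).IsSymm) (hLI : LinearIndependent ℝ A) (b : Fin m → ℝ)
    (hFne : (spectra A b).Nonempty)
    (f : Set (Matrix (Fin n) (Fin n) ℝ))
    (hface : IsFaceOfConvexSet f (spectra A b))
    (hnd : ∃ X ∈ f, Nondegenerate A X) :
    ∀ X ∈ intrinsicInterior ℝ f, Nondegenerate A X :=
  stmt15_general A b f hface hnd
end
end

section
/- Let X̄ be the optimal solution of the best approximation problem min{½‖X − W‖² : X ∈ F}, and suppose the KKT conditions hold at X̄ with multipliers (ȳ, Z̄) satisfying strict complementarity, so that W + A*(ȳ) = [V V̄]·blkdiag(R, −S)·[V V̄]ᵀ with [V V̄] orthogonal, R ≻ 0, S ≻ 0, X̄ = V R Vᵀ and Z̄ = V̄ S V̄ᵀ. For j = 1, …, m set T_j = [[VᵀA_jV, B ∘ (VᵀA_jV̄)], [(B ∘ (VᵀA_jV̄))ᵀ, 0]], where B is the matrix with entries B_{kl} = λ_k/(λ_k − μ_l), λ_k the (positive) eigenvalues of R and μ_l the (negative) eigenvalues of −S appearing in the decomposition, and let J ∈ ℝᵐˣᵐ be the matrix with entries J_{ij} = ⟨ [[VᵀA_iV,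 VᵀA_iV̄],[V̄ᵀA_iV, 0]], T_j ⟩ (this J is the Jacobian of F(y) = A(P_{Sⁿ₊}(W + A*(y))) − b at ȳ). Then X̄ is a degenerate point of F if and only if J is singular; equivalently, X̄ is nondegenerate if and only if J is nonsingular. -/
/-!
Writing `Ω` for the symmetric block matrix with all-ones diagonal blocks and off-diagonal blocks
`B`, `Bᵀ`, the matrices `T_j` are the Hadamard products `Ω ⊙ M_j`. Since `M_i` is symmetric,
`J_{ij} = ∑_{p,q} Ω_{pq} (M_i)_{pq} (M_j)_{pq}`, and the entries of `Ω` are positive because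
`λ_k > 0 > μ_l`. So `J` is the Gram matrix of the `M_i` for a weighted Frobenius inner product,
and it is nonsingular exactly when the `M_i` are linearly independent.
-/

open Matrix Set

noncomputable section

section WeightedGram

variable {κ ι ι' : Type*}

def weightedGram [Fintype ι] [Fintype ι'] (w : Matrix ι ι' ℝ) (u : κ → Matrix ι ι' ℝ) :
    Matrix κ κ ℝ :=
  of fun i j => ∑ p, ∑ q, (u i ⊙ (w ⊙ u j)) p q

def sqrtWeightedFlatten (w : Matrix ι ι' ℝ) :
    Matrix ι ι' ℝ →ₗ[ℝ] EuclideanSpace ℝ (ι × ι') where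
  toFun X := WithLp.toLp 2 fun pq => √(w pq.1 pq.2) * X pq.1 pq.2
  map_add' X Y := by ext; simp [mul_add]
  map_smul' c X := by ext; simp; ring

theorem weightedGram_eq_gram [Fintype ι] [Fintype ι'] {w : Matrix ι ι' ℝ}
    (hw : ∀ p q, 0 ≤ w p q) (u : κ → Matrix ι ι' ℝ) :
    weightedGram w u = gram ℝ (sqrtWeightedFlatten w ∘ u) := by
  ext i j
  simp only [weightedGram, gram, of_apply, Function.comp_apply, PiLp.inner_apply,
    Fintype.sum_prod_type, sqrtWeightedFlatten, LinearMap.coe_mk, AddHom.coe_mk, hadamard_apply,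
    RCLike.inner_apply, conj_trivial]
  refine Finset.sum_congr rfl fun p _ => Finset.sum_congr rfl fun q _ => ?_
  linear_combination (-(u i p q * u j p q)) * Real.mul_self_sqrt (hw p q)

theorem ker_sqrtWeightedFlatten {w : Matrix ι ι' ℝ} (hw : ∀ p q, 0 < w p q) :
    LinearMap.ker (sqrtWeightedFlatten w) = ⊥ := by
  refine LinearMap.ker_eq_bot'.mpr fun X hX => ?_
  ext p q
  have := congrArg (fun v : EuclideanSpace ℝ (ι × ι') => v (p, q)) hX
  simpa [sqrtWeightedFlatten, (Real.sqrt_pos.2 (hw p q)).ne'] using this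

theorem det_weightedGram_ne_zero_iff [Fintype κ] [DecidableEq κ] [Fintype ι] [Fintype ι']
    {w : Matrix ι ι' ℝ} (hw : ∀ p q, 0 < w p q) (u : κ → Matrix ι ι' ℝ) :
    (weightedGram w u).det ≠ 0 ↔ LinearIndependent ℝ u := by
  rw [weightedGram_eq_gram (fun p q => (hw p q).le), det_gram_ne_zero_iff_linearIndependent,
    LinearMap.linearIndependent_iff _ (ker_sqrtWeightedFlatten hw)]

end WeightedGram

theorem Matrix.fromBlocks_hadamard_fromBlocks {l m α : Type*} [Mul α]
    (A A' : Matrix l l α) (B B' : Matrix l m α) (C C' : Matrix m l α) (D D' : Matrix m m α) :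
    fromBlocks A B C D ⊙ fromBlocks A' B' C' D' =
      fromBlocks (A ⊙ A') (B ⊙ B') (C ⊙ C') (D ⊙ D') := by
  ext (i | i) (j | j) <;> rfl

theorem Matrix.trace_mul_eq_sum_hadamard {n α : Type*} [Fintype n] [CommSemiring α]
    (X : Matrix n n α) {Y : Matrix n n α} (hY : Y.IsSymm) :
    (X * Y).trace = ∑ p, ∑ q, (X ⊙ Y) p q := by
  rw [sum_hadamard_eq, hY.eq]

theorem Matrix.IsSymm.transpose_transpose_mul_mul {l n n' α : Type*} [Fintype l]
    [CommSemiring α] {A : Matrix l l α} (hA : A.IsSymm) (U : Matrix l n α) (V : Matrix l n' α) :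
    (Uᵀ * A * V)ᵀ = Vᵀ * A * U := by
  rw [transpose_mul, transpose_mul, transpose_transpose, hA.eq, Matrix.mul_assoc]

theorem stmt19_general {n m r s : ℕ}
    (A : Fin m → Matrix (Fin n) (Fin n) ℝ)
    (hA : ∀ i, (A i).IsSymm)
    -- the orthogonal decomposition `W + A*ȳ = [V V̄]·blkdiag(R, −S)·[V V̄]ᵀ`
    (V : Matrix (Fin n) (Fin r) ℝ) (Vbar : Matrix (Fin n) (Fin s) ℝ)
    (ρ : Fin r → ℝ) (hρ : ∀ k, 0 < ρ k) (σ : Fin s → ℝ) (hσ : ∀ l, 0 < σ l)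
    -- the matrix `B` with entries `B_{kl} = λ_k/(λ_k − μ_l)`, `λ_k = ρ k`, `μ_l = −σ l`
    (B : Matrix (Fin r) (Fin s) ℝ) (hB : ∀ k l, B k l = ρ k / (ρ k - (-(σ l))))
    -- the matrices `T_j`
    (T : Fin m → Matrix (Fin r ⊕ Fin s) (Fin r ⊕ Fin s) ℝ)
    (hT : ∀ j, T j = Matrix.fromBlocks (Vᵀ * A j * V)
        (Matrix.hadamard B (Vᵀ * A j * Vbar))
        (Matrix.hadamard B (Vᵀ * A j * Vbar))ᵀ 0)
    -- the matrices `Mᵢ` appearing in the degeneracy characterization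
    (M : Fin m → Matrix (Fin r ⊕ Fin s) (Fin r ⊕ Fin s) ℝ)
    (hM : ∀ i, M i = Matrix.fromBlocks (Vᵀ * A i * V) (Vᵀ * A i * Vbar)
        (Vbarᵀ * A i * V) 0)
    -- the Jacobian matrix `J` with entries `J_{ij} = ⟨Mᵢ, T_j⟩`
    (J : Matrix (Fin m) (Fin m) ℝ) (hJ : ∀ i j, J i j = (M i * T j).trace) :
    (¬ LinearIndependent ℝ M ↔ J.det = 0) ∧
      (LinearIndependent ℝ M ↔ J.det ≠ 0) := by
  set Ω : Matrix (Fin r ⊕ Fin s) (Fin r ⊕ Fin s) ℝ := fromBlocks (of 1) B Bᵀ (of 1)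
  have hB_pos : ∀ k l, 0 < B k l := fun k l => by
    rw [hB, sub_neg_eq_add]
    exact div_pos (hρ k) (add_pos (hρ k) (hσ l))
  have hΩ_pos : ∀ p q, 0 < Ω p q := by
    rintro (k | l) (k' | l') <;> simp [Ω, hB_pos]
  have hM_symm : ∀ i, (M i).IsSymm := fun i => by
    rw [hM i]
    exact .fromBlocks ((hA i).transpose_transpose_mul_mul V V)
      ((hA i).transpose_transpose_mul_mul V Vbar) isSymm_zero
  have hT_eq : ∀ j, T j = Ω ⊙ M j := fun j => by
    rw [hT j, hM j, fromBlocks_hadamard_fromBlocks, of_one_hadamard, of_one_hadamard,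
      transpose_hadamard, (hA j).transpose_transpose_mul_mul]
  have hT_symm : ∀ j, (T j).IsSymm := fun j => by
    rw [hT_eq j, IsSymm, transpose_hadamard, (hM_symm j).eq,
      (IsSymm.fromBlocks rfl rfl rfl : Ω.IsSymm).eq]
  have hJ_eq : J = weightedGram Ω M := by
    ext i j
    rw [hJ, trace_mul_eq_sum_hadamard _ (hT_symm j), hT_eq]
    rfl
  have hdet := det_weightedGram_ne_zero_iff hΩ_pos M
  rw [hJ_eq]
  exact ⟨by rw [← hdet, not_not], hdet.symm⟩

/-- at an optimal solution `X̄` of the best approximation problem where the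
KKT conditions hold with strict complementarity, writing
`W + A*ȳ = [V V̄]·blkdiag(R, −S)·[V V̄]ᵀ` with `R = Diag ρ ≻ 0`, `S = Diag σ ≻ 0`,
`X̄ = V R Vᵀ`, `Z̄ = V̄ S V̄ᵀ`, and defining `B`, `T_j` and the Jacobian matrix `J` as in
the statement, `X̄` is degenerate iff `J` is singular; equivalently `X̄` is nondegenerate
iff `J` is nonsingular.  (Degeneracy of `X̄` is expressed through the linear independence
of the matrices `Mᵢ = [[VᵀAᵢV, VᵀAᵢV̄],[V̄ᵀAᵢV, 0]]`.) -/
theorem stmt19 {n m r s : ℕ} (hrs : r + s = n)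
    (A : Fin m → Matrix (Fin n) (Fin n) ℝ)
    (hA : ∀ i, (A i).IsSymm) (hLI : LinearIndependent ℝ A) (b : Fin m → ℝ)
    (W : Matrix (Fin n) (Fin n) ℝ) (hW : W.IsSymm)
    (Xbar Zbar : Matrix (Fin n) (Fin n) ℝ) (ybar : Fin m → ℝ)
    -- `X̄` is the optimal solution of the best approximation problem
    (hopt : Xbar ∈ spectra A b ∧
      ∀ Y ∈ spectra A b, frobSq (Xbar - W) ≤ frobSq (Y - W))
    -- the KKT conditions at `X̄` with multipliers `(ȳ, Z̄)`
    (hKKTdual : Xbar - W - adjA A ybar - Zbar = 0)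
    (hKKTZ : Zbar.PosSemidef)
    (hKKTcs : (Zbar * Xbar).trace = 0)
    -- strict complementarity
    (hsc : Xbar.rank + Zbar.rank = n)
    -- the orthogonal decomposition `W + A*ȳ = [V V̄]·blkdiag(R, −S)·[V V̄]ᵀ`
    (V : Matrix (Fin n) (Fin r) ℝ) (Vbar : Matrix (Fin n) (Fin s) ℝ)
    (hVV : Vᵀ * V = 1) (hVbVb : Vbarᵀ * Vbar = 1) (hVVb : Vᵀ * Vbar = 0)
    (hcomplete : V * Vᵀ + Vbar * Vbarᵀ = 1)
    (ρ : Fin r → ℝ) (hρ : ∀ k, 0 < ρ k) (σ : Fin s → ℝ) (hσ : ∀ l, 0 < σ l)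
    (hXbar : Xbar = V * Matrix.diagonal ρ * Vᵀ)
    (hZbar : Zbar = Vbar * Matrix.diagonal σ * Vbarᵀ)
    -- the matrix `B` with entries `B_{kl} = λ_k/(λ_k − μ_l)`, `λ_k = ρ k`, `μ_l = −σ l`
    (B : Matrix (Fin r) (Fin s) ℝ) (hB : ∀ k l, B k l = ρ k / (ρ k - (-(σ l))))
    -- the matrices `T_j`
    (T : Fin m → Matrix (Fin r ⊕ Fin s) (Fin r ⊕ Fin s) ℝ)
    (hT : ∀ j, T j = Matrix.fromBlocks (Vᵀ * A j * V)
        (Matrix.hadamard B (Vᵀ * A j * Vbar))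
        (Matrix.hadamard B (Vᵀ * A j * Vbar))ᵀ 0)
    -- the matrices `Mᵢ` appearing in the degeneracy characterization
    (M : Fin m → Matrix (Fin r ⊕ Fin s) (Fin r ⊕ Fin s) ℝ)
    (hM : ∀ i, M i = Matrix.fromBlocks (Vᵀ * A i * V) (Vᵀ * A i * Vbar)
        (Vbarᵀ * A i * V) 0)
    -- the Jacobian matrix `J` with entries `J_{ij} = ⟨Mᵢ, T_j⟩`
    (J : Matrix (Fin m) (Fin m) ℝ) (hJ : ∀ i j, J i j = (M i * T j).trace) :
    (¬ LinearIndependent ℝ M ↔ J.det = 0) ∧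
      (LinearIndependent ℝ M ↔ J.det ≠ 0) :=
  stmt19_general A hA V Vbar ρ hρ σ hσ B hB T hT M hM J hJ
end
end
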